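/- arXiv:2307.14929 — 4 statements merged into one kernel-verified Lean document; each statement's English description precedes it below -/
import Mathlib

section
/- For every error probability r ∈ [0,1], the channel capacity of the ribosome channel satisfies g(r) ≤ C(r) ≤ log₂ 21. -/
open Finset

/-- The ribosome channel: probability of output `y` given input codon `x`,
with error probability `r` and genetic code `G`. -/
noncomputable def rib (G : Fin 64 → Fin 21) (r : ℝ) (y : Fin 21) (x : Fin 64) : ℝ :=
  if y = G x then 1 - r else r / 20

/-- Mutual information (in bits) of the ribosome channel at input distribution `q`.
Note `Real.logb 2 0 = 0`, which realizes the convention `0 · log₂ 0 = 0`. -/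
noncomputable def mutualInfo (G : Fin 64 → Fin 21) (r : ℝ) (q : Fin 64 → ℝ) : ℝ :=
  ∑ x : Fin 64, ∑ y : Fin 21,
    q x * rib G r y x *
      Real.logb 2 (rib G r y x / ∑ x' : Fin 64, q x' * rib G r y x')

/-- `q` is a probability distribution on the 64 codons. -/
def IsDist (q : Fin 64 → ℝ) : Prop := (∀ x, 0 ≤ q x) ∧ ∑ x : Fin 64, q x = 1

/-- The channel capacity: supremum of the mutual information over all input distributions. -/
noncomputable def capacity (G : Fin 64 → Fin 21) (r : ℝ) : ℝ :=
  sSup {c : ℝ | ∃ q : Fin 64 → ℝ, IsDist q ∧ c = mutualInfo G r q}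

/-- `G` has the fiber sizes of the standard genetic code: exactly 2 outputs have a
fiber of size 1, 9 of size 2, 2 of size 3, 5 of size 4, and 3 of size 6. -/
def FiberCode (G : Fin 64 → Fin 21) : Prop :=
  ((univ.filter fun y : Fin 21 => (univ.filter fun x : Fin 64 => G x = y).card = 1).card = 2) ∧
  ((univ.filter fun y : Fin 21 => (univ.filter fun x : Fin 64 => G x = y).card = 2).card = 9) ∧
  ((univ.filter fun y : Fin 21 => (univ.filter fun x : Fin 64 => G x = y).card = 3).card = 2) ∧
  ((univ.filter fun y : Fin 21 => (univ.filter fun x : Fin 64 => G x = y).card = 4).card = 5) ∧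
  ((univ.filter fun y : Fin 21 => (univ.filter fun x : Fin 64 => G x = y).card = 6).card = 3)

/-- The lower-bound function `g` of Theorem II.1 (base-2 logarithms; since
`Real.logb 2 0 = 0`, terms of the form `0 · log₂ 0` vanish as intended). -/
noncomputable def g (r : ℝ) : ℝ :=
  (1/64) * (2*(1-r) * Real.logb 2 (1280*(1-r)/(43*r+20))
    + (63*r/10) * Real.logb 2 (64*r/(43*r+20))
    + 18*(1-r) * Real.logb 2 (640*(1-r)/(11*r+20))
    + (279*r/10) * Real.logb 2 (32*r/(11*r+20))
    + 6*(1-r) * Real.logb 2 (1280*(1-r)/(r+60))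
    + (61*r/10) * Real.logb 2 (64*r/(r+60))
    + 20*(1-r) * Real.logb 2 (64*(1-r)/(4-r))
    + 15*r * Real.logb 2 (16*r/(5*(4-r)))
    + 18*(1-r) * Real.logb 2 (640*(1-r)/(60-31*r))
    + (87*r/10) * Real.logb 2 (32*r/(60-31*r)))


/-! For every input `x`, `∑_y W(y|x) log₂ (W(y|x)/Q(y)) ≤ -∑_y W(y|x) log₂ Q(y)` because
`W ≤ 1`, so the mutual information is at most the entropy of the output distribution `Q`, and
Jensen's inequality for the concave `-t log t` bounds that entropy by `log₂ 21`.

For the lower bound, `g r` is the mutual information at the uniform input. There `Q(y)` depends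
on `y` only through the size `n` of the fibre of `y`, so the mutual information splits into one
term per fibre size, weighted by the number of amino acids with that fibre size. -/

open Real

theorem sum_ite_eq_card_filter_mul_add {X : Type*} [Fintype X] (p : X → Prop) [DecidablePred p]
    (u v : ℝ) :
    ∑ x, (if p x then u else v) = #{x | p x} * u + (Fintype.card X - #{x | p x}) * v := by
  have hcard := card_filter_add_card_filter_not (s := univ) p
  rw [card_univ] at hcard
  rw [sum_ite, sum_const, sum_const, nsmul_eq_mul, nsmul_eq_mul, ← hcard]
  push_cast
  ring

theorem sum_comp_eq_sum_card_filter_smul {ι κ M : Type*} [Fintype ι] [DecidableEq κ]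
    [AddCommMonoid M] (N : ι → κ) (f : κ → M) {K : Finset κ}
    (hK : ∑ k ∈ K, #{i | N i = k} = Fintype.card ι) :
    ∑ i, f (N i) = ∑ k ∈ K, #{i | N i = k} • f k := by
  rw [sum_card_fiberwise_eq_card_filter, ← card_univ, card_filter_eq_iff] at hK
  rw [← sum_fiberwise_of_maps_to' hK]
  simp only [sum_const]

theorem sum_negMulLog_le_log_card {Y : Type*} [Fintype Y] {p : Y → ℝ} (hp0 : ∀ y, 0 ≤ p y)
    (hp1 : ∑ y, p y = 1) : ∑ y, negMulLog (p y) ≤ log (Fintype.card Y) := by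
  have : Nonempty Y := by
    by_contra h
    simp [not_nonempty_iff.mp h] at hp1
  have hcard : (0 : ℝ) < Fintype.card Y := by exact_mod_cast Fintype.card_pos
  have jensen := concaveOn_negMulLog.le_map_sum (t := univ)
    (w := fun _ => (Fintype.card Y : ℝ)⁻¹) (p := p) (fun _ _ => by positivity)
    (by simp [hcard.ne']) (fun y _ => Set.mem_Ici.2 (hp0 y))
  have hrhs : negMulLog (Fintype.card Y : ℝ)⁻¹ = (Fintype.card Y : ℝ)⁻¹ * log (Fintype.card Y) := by
    simp [negMulLog, log_inv]
  simp only [smul_eq_mul, ← mul_sum, hp1, mul_one, hrhs] at jensen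
  exact le_of_mul_le_mul_left jensen (inv_pos.2 hcard)

theorem mul_logb_div_le_neg_mul_logb {q w Q : ℝ} (hq : 0 ≤ q) (hw0 : 0 ≤ w) (hw1 : w ≤ 1)
    (hQ : q * w ≤ Q) : q * w * logb 2 (w / Q) ≤ -(q * w * logb 2 Q) := by
  rcases (mul_nonneg hq hw0).eq_or_lt with h | h
  · simp [← h]
  · have hQ : 0 < Q := h.trans_le hQ
    have hw : 0 < w := pos_of_mul_pos_right h hq
    rw [logb_div hw.ne' hQ.ne', mul_sub]
    linarith [mul_nonpos_of_nonneg_of_nonpos h.le (logb_nonpos one_lt_two hw0 hw1)]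

section Channel

variable {X Y : Type*} [Fintype X] [Fintype Y]

noncomputable def channelInfo (W : Y → X → ℝ) (q : X → ℝ) : ℝ :=
  ∑ x, ∑ y, q x * W y x * logb 2 (W y x / ∑ x', q x' * W y x')

theorem channelInfo_le_logb_card {W : Y → X → ℝ} (hW0 : ∀ y x, 0 ≤ W y x)
    (hW1 : ∀ x, ∑ y, W y x = 1) {q : X → ℝ} (hq0 : ∀ x, 0 ≤ q x) (hq1 : ∑ x, q x = 1) :
    channelInfo W q ≤ logb 2 (Fintype.card Y) := by
  set Q : Y → ℝ := fun y => ∑ x', q x' * W y x'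
  have hQ0 (y : Y) : 0 ≤ Q y := sum_nonneg fun x _ => mul_nonneg (hq0 x) (hW0 y x)
  have hQ1 : ∑ y, Q y = 1 := by
    rw [sum_comm]
    simp [← mul_sum, hW1, hq1]
  have hW_le_one (y : Y) (x : X) : W y x ≤ 1 :=
    hW1 x ▸ single_le_sum (fun y _ => hW0 y x) (mem_univ y)
  calc channelInfo W q ≤ ∑ x, ∑ y, -(q x * W y x * logb 2 (Q y)) :=
        sum_le_sum fun x _ => sum_le_sum fun y _ =>
          mul_logb_div_le_neg_mul_logb (hq0 x) (hW0 y x) (hW_le_one y x)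
            (single_le_sum (f := fun x' => q x' * W y x')
              (fun x' _ => mul_nonneg (hq0 x') (hW0 y x')) (mem_univ x))
    _ = (∑ y, negMulLog (Q y)) / log 2 := by
      rw [sum_comm, sum_div]
      refine sum_congr rfl fun y _ => ?_
      simp only [negMulLog, logb, Q, neg_mul, sum_mul, sum_div, ← sum_neg_distrib,
        mul_div_assoc', neg_div]
    _ ≤ log (Fintype.card Y) / log 2 := by
      gcongr
      exact sum_negMulLog_le_log_card hQ0 hQ1

/-- `m` times the contribution to the mutual information at the uniform input on `m` inputs of
an output `y` with `n` preimages, for the channel with `W(y|x) = a` on the fibre of `y` and `b`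
off it. -/
noncomputable def fiberInfo (a b m n : ℝ) : ℝ :=
  n * a * logb 2 (a / ((n * a + (m - n) * b) / m))
    + (m - n) * b * logb 2 (b / ((n * a + (m - n) * b) / m))

theorem fiberInfo_eq {a b m n c d : ℝ} (hQ : (n * a + (m - n) * b) / m = d / c) :
    fiberInfo a b m n = n * a * logb 2 (c * a / d) + (m - n) * b * logb 2 (c * b / d) := by
  rw [fiberInfo, hQ, div_div_eq_mul_div, div_div_eq_mul_div, mul_comm a, mul_comm b]

theorem channelInfo_ite_uniform [DecidableEq Y] (G : X → Y) (a b : ℝ) :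
    channelInfo (fun y x => if y = G x then a else b) (fun _ => 1 / Fintype.card X)
      = 1 / Fintype.card X * ∑ y, fiberInfo a b (Fintype.card X) #{x | G x = y} := by
  unfold channelInfo
  rw [sum_comm, mul_sum]
  refine sum_congr rfl fun y _ => ?_
  have hfiber : #{x | y = G x} = #{x | G x = y} := by simp_rw [eq_comm]
  have hQ : ∑ x', 1 / (Fintype.card X : ℝ) * (if y = G x' then a else b)
      = (#{x | G x = y} * a + (Fintype.card X - #{x | G x = y}) * b) / Fintype.card X := by
    rw [← mul_sum, sum_ite_eq_card_filter_mul_add, hfiber]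
    ring
  simp only [hQ, mul_assoc, ← mul_sum]
  set Q := (#{x | G x = y} * a + (Fintype.card X - #{x | G x = y}) * b) / (Fintype.card X : ℝ)
  have hterm (x : X) : (if y = G x then a else b) * logb 2 ((if y = G x then a else b) / Q)
      = if y = G x then a * logb 2 (a / Q) else b * logb 2 (b / Q) := by
    split_ifs <;> rfl
  rw [sum_congr rfl fun x _ => hterm x, sum_ite_eq_card_filter_mul_add, hfiber, fiberInfo]
  ring

end Channel

theorem g_eq_sum_fiberInfo (r : ℝ) :
    g r = 1 / 64 * (2 * fiberInfo (1 - r) (r / 20) 64 1 + 9 * fiberInfo (1 - r) (r / 20) 64 2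
      + 2 * fiberInfo (1 - r) (r / 20) 64 3 + 5 * fiberInfo (1 - r) (r / 20) 64 4
      + 3 * fiberInfo (1 - r) (r / 20) 64 6) := by
  rw [fiberInfo_eq (c := 1280) (d := 43 * r + 20) (by ring),
    fiberInfo_eq (c := 640) (d := 11 * r + 20) (by ring),
    fiberInfo_eq (c := 1280) (d := r + 60) (by ring),
    fiberInfo_eq (c := 64) (d := 4 - r) (by ring),
    fiberInfo_eq (c := 640) (d := 60 - 31 * r) (by ring), g,
    mul_comm 5, ← div_div]
  ring_nf

theorem FiberCode.sum_comp_card_fiber {G : Fin 64 → Fin 21} (hG : FiberCode G) (f : ℕ → ℝ) :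
    ∑ y, f #{x | G x = y} = 2 * f 1 + 9 * f 2 + 2 * f 3 + 5 * f 4 + 3 * f 6 := by
  obtain ⟨h1, h2, h3, h4, h6⟩ := hG
  rw [sum_comp_eq_sum_card_filter_smul (fun y => #{x | G x = y}) f (K := {1, 2, 3, 4, 6})]
  · simp [h1, h2, h3, h4, h6, add_assoc]
  · simp [h1, h2, h3, h4, h6]

theorem rib_nonneg {r : ℝ} (hr : r ∈ Set.Icc (0 : ℝ) 1) (G : Fin 64 → Fin 21) (y : Fin 21)
    (x : Fin 64) : 0 ≤ rib G r y x := by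
  unfold rib
  split_ifs <;> linarith [hr.1, hr.2]

theorem sum_rib (G : Fin 64 → Fin 21) (r : ℝ) (x : Fin 64) : ∑ y, rib G r y x = 1 := by
  simp only [rib, sum_ite_eq_card_filter_mul_add, filter_eq', mem_univ, if_true, card_singleton,
    Fintype.card_fin]
  ring

theorem mutualInfo_eq_channelInfo (G : Fin 64 → Fin 21) (r : ℝ) (q : Fin 64 → ℝ) :
    mutualInfo G r q = channelInfo (rib G r) q :=
  rfl

theorem mutualInfo_le_logb_21 (G : Fin 64 → Fin 21) {r : ℝ} (hr : r ∈ Set.Icc (0 : ℝ) 1)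
    {q : Fin 64 → ℝ} (hq : IsDist q) : mutualInfo G r q ≤ logb 2 21 := by
  rw [mutualInfo_eq_channelInfo]
  simpa using channelInfo_le_logb_card (rib_nonneg hr G) (sum_rib G r) hq.1 hq.2

theorem mutualInfo_uniform (G : Fin 64 → Fin 21) (hG : FiberCode G) (r : ℝ) :
    mutualInfo G r (fun _ => 1 / 64) = g r := by
  rw [mutualInfo_eq_channelInfo]
  refine (channelInfo_ite_uniform G (1 - r) (r / 20)).trans ?_
  simp only [Fintype.card_fin, Nat.cast_ofNat]
  rw [hG.sum_comp_card_fiber fun n => fiberInfo _ _ _ n, g_eq_sum_fiberInfo]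
  norm_num

/-- Theorem II.1: for every error probability `r ∈ [0,1]`, the channel capacity of the
ribosome channel satisfies `g r ≤ C r ≤ log₂ 21`. -/
theorem ribosome_capacity_bounds (G : Fin 64 → Fin 21) (hG : FiberCode G)
    (r : ℝ) (hr : r ∈ Set.Icc (0 : ℝ) 1) :
    g r ≤ capacity G r ∧ capacity G r ≤ Real.logb 2 21 := by
  have hunif : IsDist (fun _ => 1 / 64) := ⟨fun _ => by norm_num, by simp⟩
  have hbound : ∀ c ∈ {c : ℝ | ∃ q : Fin 64 → ℝ, IsDist q ∧ c = mutualInfo G r q},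
      c ≤ logb 2 21 := by
    rintro _ ⟨q, hq, rfl⟩
    exact mutualInfo_le_logb_21 G hr hq
  exact ⟨le_csSup ⟨_, hbound⟩ ⟨_, hunif, (mutualInfo_uniform G hG r).symm⟩,
    csSup_le ⟨_, _, hunif, rfl⟩ hbound⟩
end

section
/- For every error probability r ∈ [0,1], the mutual information of the ribosome channel evaluated at the uniform input distribution on the 64 codons equals g(r), i.e., I_r(uniform) = g(r). -/
open Finset

/-- Per-output contribution to the mutual information at the uniform distribution,
as a function of the fiber size `n`. -/
noncomputable def Fterm (r : ℝ) (n : ℕ) : ℝ :=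
  (n : ℝ) * (1 / 64 * (1 - r)) *
      Real.logb 2 ((1 - r) / ((n : ℝ) * (1 / 64 * (1 - r)) + (64 - (n : ℝ)) * (1 / 64 * (r / 20))))
    + (64 - (n : ℝ)) * (1 / 64 * (r / 20)) *
      Real.logb 2 ((r / 20) / ((n : ℝ) * (1 / 64 * (1 - r)) + (64 - (n : ℝ)) * (1 / 64 * (r / 20))))

lemma sum_ite_card (G : Fin 64 → Fin 21) (y : Fin 21) (a b : ℝ) :
    ∑ x : Fin 64, (if y = G x then a else b)
      = ((univ.filter fun x : Fin 64 => G x = y).card : ℝ) * a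
        + (64 - ((univ.filter fun x : Fin 64 => G x = y).card : ℝ)) * b := by
  classical
  rw [Finset.sum_ite, Finset.sum_const, Finset.sum_const]
  have h1 : (univ.filter fun x : Fin 64 => y = G x) = univ.filter fun x : Fin 64 => G x = y := by
    simp [eq_comm]
  have h2 : (univ.filter fun x : Fin 64 => y = G x).card
      + (univ.filter fun x : Fin 64 => ¬ y = G x).card = 64 := by
    rw [Finset.card_filter_add_card_filter_not]; simp
  rw [h1] at h2
  have hle : (univ.filter fun x : Fin 64 => G x = y).card ≤ 64 := by omega
  rw [h1]
  have h3 : (univ.filter fun x : Fin 64 => ¬ y = G x).card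
      = 64 - (univ.filter fun x : Fin 64 => G x = y).card := by omega
  rw [h3, nsmul_eq_mul, nsmul_eq_mul]
  push_cast [hle]
  ring

lemma innerSum (G : Fin 64 → Fin 21) (r : ℝ) (y : Fin 21) :
    ∑ x : Fin 64, (1 / 64 : ℝ) * rib G r y x *
        Real.logb 2 (rib G r y x / ∑ x' : Fin 64, (1 / 64 : ℝ) * rib G r y x')
      = Fterm r (univ.filter fun x : Fin 64 => G x = y).card := by
  set c : ℕ := (univ.filter fun x : Fin 64 => G x = y).card with hc
  have hS : (∑ x' : Fin 64, (1 / 64 : ℝ) * rib G r y x')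
      = (c : ℝ) * (1 / 64 * (1 - r)) + (64 - (c : ℝ)) * (1 / 64 * (r / 20)) := by
    have : ∀ x' : Fin 64, (1 / 64 : ℝ) * rib G r y x'
        = if y = G x' then 1 / 64 * (1 - r) else 1 / 64 * (r / 20) := by
      intro x'; unfold rib; split_ifs <;> ring
    rw [Finset.sum_congr rfl (fun x' _ => this x'), sum_ite_card]
  rw [hS]
  have : ∀ x : Fin 64, (1 / 64 : ℝ) * rib G r y x *
        Real.logb 2 (rib G r y x /
          ((c : ℝ) * (1 / 64 * (1 - r)) + (64 - (c : ℝ)) * (1 / 64 * (r / 20))))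
      = if y = G x then
          1 / 64 * (1 - r) * Real.logb 2 ((1 - r) /
            ((c : ℝ) * (1 / 64 * (1 - r)) + (64 - (c : ℝ)) * (1 / 64 * (r / 20))))
        else
          1 / 64 * (r / 20) * Real.logb 2 ((r / 20) /
            ((c : ℝ) * (1 / 64 * (1 - r)) + (64 - (c : ℝ)) * (1 / 64 * (r / 20)))) := by
    intro x; unfold rib; split_ifs <;> ring
  rw [Finset.sum_congr rfl (fun x _ => this x), sum_ite_card]
  unfold Fterm
  ring

lemma Fterm_eval (r : ℝ) :
    2 * Fterm r 1 + 9 * Fterm r 2 + 2 * Fterm r 3 + 5 * Fterm r 4 + 3 * Fterm r 6 = g r := by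
  have q1 : ((1:ℕ):ℝ) * (1/64*(1-r)) + (64 - ((1:ℕ):ℝ)) * (1/64*(r/20)) = (43*r+20)/1280 := by
    push_cast; ring
  have q2 : ((2:ℕ):ℝ) * (1/64*(1-r)) + (64 - ((2:ℕ):ℝ)) * (1/64*(r/20)) = (11*r+20)/640 := by
    push_cast; ring
  have q3 : ((3:ℕ):ℝ) * (1/64*(1-r)) + (64 - ((3:ℕ):ℝ)) * (1/64*(r/20)) = (r+60)/1280 := by
    push_cast; ring
  have q4 : ((4:ℕ):ℝ) * (1/64*(1-r)) + (64 - ((4:ℕ):ℝ)) * (1/64*(r/20)) = (4-r)/64 := by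
    push_cast; ring
  have q6 : ((6:ℕ):ℝ) * (1/64*(1-r)) + (64 - ((6:ℕ):ℝ)) * (1/64*(r/20)) = (60-31*r)/640 := by
    push_cast; ring
  unfold Fterm
  rw [q1, q2, q3, q4, q6]
  rw [show (1-r) / ((43*r+20)/1280) = 1280*(1-r)/(43*r+20) by rw [div_div_eq_mul_div]; ring]
  rw [show (r/20) / ((43*r+20)/1280) = 64*r/(43*r+20) by rw [div_div_eq_mul_div]; ring]
  rw [show (1-r) / ((11*r+20)/640) = 640*(1-r)/(11*r+20) by rw [div_div_eq_mul_div]; ring]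
  rw [show (r/20) / ((11*r+20)/640) = 32*r/(11*r+20) by rw [div_div_eq_mul_div]; ring]
  rw [show (1-r) / ((r+60)/1280) = 1280*(1-r)/(r+60) by rw [div_div_eq_mul_div]; ring]
  rw [show (r/20) / ((r+60)/1280) = 64*r/(r+60) by rw [div_div_eq_mul_div]; ring]
  rw [show (1-r) / ((4-r)/64) = 64*(1-r)/(4-r) by rw [div_div_eq_mul_div]; ring]
  rw [show (r/20) / ((4-r)/64) = 16*r/(5*(4-r)) by
    rw [div_div_eq_mul_div, show (16:ℝ)*r/(5*(4-r)) = 16*r/5/(4-r) from (div_div _ _ _).symm]; ring]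
  rw [show (1-r) / ((60-31*r)/640) = 640*(1-r)/(60-31*r) by rw [div_div_eq_mul_div]; ring]
  rw [show (r/20) / ((60-31*r)/640) = 32*r/(60-31*r) by rw [div_div_eq_mul_div]; ring]
  unfold g
  push_cast
  ring

/-- The mutual information of the ribosome channel at the uniform input distribution
on the 64 codons equals `g r`. -/
theorem mutualInfo_uniform_eq_g (G : Fin 64 → Fin 21) (hG : FiberCode G)
    (r : ℝ) (hr : r ∈ Set.Icc (0 : ℝ) 1) :
    mutualInfo G r (fun _ => 1 / 64) = g r := by
  classical
  have step1 : mutualInfo G r (fun _ => 1 / 64)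
      = ∑ y : Fin 21, Fterm r (univ.filter fun x : Fin 64 => G x = y).card := by
    unfold mutualInfo
    rw [Finset.sum_comm]
    exact Finset.sum_congr rfl fun y _ => innerSum G r y
  rw [step1]
  set S : ℕ → Finset (Fin 21) :=
    fun n => univ.filter fun y : Fin 21 => (univ.filter fun x : Fin 64 => G x = y).card = n with hS
  obtain ⟨h1, h2, h3, h4, h6⟩ := hG
  have c1 : (S 1).card = 2 := h1
  have c2 : (S 2).card = 9 := h2
  have c3 : (S 3).card = 2 := h3
  have c4 : (S 4).card = 5 := h4
  have c6 : (S 6).card = 3 := h6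
  have hdisj : ∀ m n : ℕ, m ≠ n → Disjoint (S m) (S n) := by
    intro m n hmn
    simp only [hS, Finset.disjoint_left, Finset.mem_filter]
    rintro y ⟨-, e1⟩ ⟨-, e2⟩
    exact hmn (e1 ▸ e2)
  have hU : S 1 ∪ S 2 ∪ S 3 ∪ S 4 ∪ S 6 = univ := by
    apply Finset.eq_univ_of_card
    rw [Finset.card_union_of_disjoint, Finset.card_union_of_disjoint,
        Finset.card_union_of_disjoint, Finset.card_union_of_disjoint]
    · rw [c1, c2, c3, c4, c6]; rfl
    · exact hdisj 1 2 (by norm_num)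
    · rw [Finset.disjoint_union_left]
      exact ⟨hdisj 1 3 (by norm_num), hdisj 2 3 (by norm_num)⟩
    · rw [Finset.disjoint_union_left, Finset.disjoint_union_left]
      exact ⟨⟨hdisj 1 4 (by norm_num), hdisj 2 4 (by norm_num)⟩, hdisj 3 4 (by norm_num)⟩
    · rw [Finset.disjoint_union_left, Finset.disjoint_union_left, Finset.disjoint_union_left]
      exact ⟨⟨⟨hdisj 1 6 (by norm_num), hdisj 2 6 (by norm_num)⟩, hdisj 3 6 (by norm_num)⟩,
        hdisj 4 6 (by norm_num)⟩
  have hsum : ∀ n : ℕ, ∑ y ∈ S n, Fterm r (univ.filter fun x : Fin 64 => G x = y).card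
      = (S n).card * Fterm r n := by
    intro n
    rw [Finset.sum_congr rfl fun y hy => by
        rw [(Finset.mem_filter.mp hy).2], Finset.sum_const, nsmul_eq_mul]
  rw [← hU, Finset.sum_union, Finset.sum_union, Finset.sum_union, Finset.sum_union,
      hsum 1, hsum 2, hsum 3, hsum 4, hsum 6, c1, c2, c3, c4, c6]
  · rw [← Fterm_eval r]; push_cast; ring
  · exact hdisj 1 2 (by norm_num)
  · rw [Finset.disjoint_union_left]
    exact ⟨hdisj 1 3 (by norm_num), hdisj 2 3 (by norm_num)⟩
  · rw [Finset.disjoint_union_left, Finset.disjoint_union_left]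
    exact ⟨⟨hdisj 1 4 (by norm_num), hdisj 2 4 (by norm_num)⟩, hdisj 3 4 (by norm_num)⟩
  · rw [Finset.disjoint_union_left, Finset.disjoint_union_left, Finset.disjoint_union_left]
    exact ⟨⟨⟨hdisj 1 6 (by norm_num), hdisj 2 6 (by norm_num)⟩, hdisj 3 6 (by norm_num)⟩,
      hdisj 4 6 (by norm_num)⟩
end

section
/- Let y ∈ Y be an output whose fiber under the genetic code G has size k, and for r ∈ [0,1] define f_r(y) = ∑_{x∈X} p_r(y|x) · log₂( 64·p_r(y|x) / ∑_{x'∈X} p_r(y|x') ). Then f_r(y) = k(1−r)·log₂( 1280(1−r) / (20k + (64−21k)r) ) + ((64−k)r/20)·log₂( 64r / (20k + (64−21k)r) ), with the convention 0·log₂0 = 0. In particular, for k = 1, f_r(y) = (1−r)·log₂(1280(1−r)/(43r+20)) + (63r/20)·log₂(64r/(43r+20)). -/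
open Finset

/-- If the fiber of `y` under `G` has size `k`, then
`f_r(y) = ∑ₓ p_r(y|x) log₂(64 p_r(y|x) / ∑ₓ' p_r(y|x'))` equals
`k(1−r)·log₂(1280(1−r)/(20k+(64−21k)r)) + ((64−k)r/20)·log₂(64r/(20k+(64−21k)r))`;
in particular, for `k = 1` it equals
`(1−r)·log₂(1280(1−r)/(43r+20)) + (63r/20)·log₂(64r/(43r+20))`. -/
theorem ribosome_f_formula (G : Fin 64 → Fin 21) (hG : FiberCode G)
    (y : Fin 21) (k : ℕ) (hk : (univ.filter fun x : Fin 64 => G x = y).card = k)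
    (r : ℝ) (hr : r ∈ Set.Icc (0 : ℝ) 1) :
    (∑ x : Fin 64, rib G r y x *
        Real.logb 2 (64 * rib G r y x / ∑ x' : Fin 64, rib G r y x') =
      (k : ℝ) * (1 - r) *
          Real.logb 2 (1280 * (1 - r) / (20 * (k : ℝ) + (64 - 21 * (k : ℝ)) * r)) +
        ((64 - (k : ℝ)) * r / 20) *
          Real.logb 2 (64 * r / (20 * (k : ℝ) + (64 - 21 * (k : ℝ)) * r))) ∧
      (k = 1 → ∑ x : Fin 64, rib G r y x *
          Real.logb 2 (64 * rib G r y x / ∑ x' : Fin 64, rib G r y x') =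
        (1 - r) * Real.logb 2 (1280 * (1 - r) / (43 * r + 20)) +
          (63 * r / 20) * Real.logb 2 (64 * r / (43 * r + 20))) := by
  classical
  obtain ⟨hr0, hr1⟩ := hr
  set F := univ.filter fun x : Fin 64 => G x = y with hF
  have hk64 : k ≤ 64 := by
    rw [← hk]
    simpa using (card_filter_le (univ : Finset (Fin 64)) _)
  have hribF : ∀ x ∈ F, rib G r y x = 1 - r := by
    intro x hx
    have : G x = y := (mem_filter.mp hx).2
    simp [rib, this]
  have hribFc : ∀ x ∈ Fᶜ, rib G r y x = r / 20 := by
    intro x hx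
    have hne : ¬ G x = y := by
      have := mem_compl.mp hx
      simpa [hF, mem_filter] using this
    have : ¬ y = G x := fun h => hne h.symm
    simp [rib, this]
  have hcardF : F.card = k := hk
  have hcardFc : (Fᶜ).card = 64 - k := by
    rw [card_compl, hcardF]; rfl
  have hsum : ∑ x' : Fin 64, rib G r y x' = (k : ℝ) * (1 - r) + (64 - (k : ℝ)) * (r / 20) := by
    rw [← sum_add_sum_compl F]
    rw [Finset.sum_congr rfl hribF, Finset.sum_congr rfl hribFc, sum_const, sum_const,
      hcardF, hcardFc, nsmul_eq_mul, nsmul_eq_mul]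
    have : ((64 - k : ℕ) : ℝ) = 64 - (k : ℝ) := by
      push_cast [hk64]; ring
    rw [this]
  have key : ∑ x : Fin 64, rib G r y x *
      Real.logb 2 (64 * rib G r y x / ∑ x' : Fin 64, rib G r y x') =
      (k : ℝ) * ((1 - r) * Real.logb 2 (64 * (1 - r) /
          ((k : ℝ) * (1 - r) + (64 - (k : ℝ)) * (r / 20)))) +
      (64 - (k : ℝ)) * ((r / 20) * Real.logb 2 (64 * (r / 20) /
          ((k : ℝ) * (1 - r) + (64 - (k : ℝ)) * (r / 20)))) := by
    rw [← sum_add_sum_compl F]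
    have h1 : ∀ x ∈ F, rib G r y x *
        Real.logb 2 (64 * rib G r y x / ∑ x' : Fin 64, rib G r y x') =
        (1 - r) * Real.logb 2 (64 * (1 - r) /
          ((k : ℝ) * (1 - r) + (64 - (k : ℝ)) * (r / 20))) := by
      intro x hx; rw [hribF x hx, hsum]
    have h2 : ∀ x ∈ Fᶜ, rib G r y x *
        Real.logb 2 (64 * rib G r y x / ∑ x' : Fin 64, rib G r y x') =
        (r / 20) * Real.logb 2 (64 * (r / 20) /
          ((k : ℝ) * (1 - r) + (64 - (k : ℝ)) * (r / 20))) := by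
      intro x hx; rw [hribFc x hx, hsum]
    rw [Finset.sum_congr rfl h1, Finset.sum_congr rfl h2, sum_const, sum_const,
      hcardF, hcardFc, nsmul_eq_mul, nsmul_eq_mul]
    have : ((64 - k : ℕ) : ℝ) = 64 - (k : ℝ) := by
      push_cast [hk64]; ring
    rw [this]
  have hD : (k : ℝ) * (1 - r) + (64 - (k : ℝ)) * (r / 20)
      = (20 * (k : ℝ) + (64 - 21 * (k : ℝ)) * r) / 20 := by ring
  have harg1 : 64 * (1 - r) / ((k : ℝ) * (1 - r) + (64 - (k : ℝ)) * (r / 20))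
      = 1280 * (1 - r) / (20 * (k : ℝ) + (64 - 21 * (k : ℝ)) * r) := by
    rw [hD, div_div_eq_mul_div]
    congr 1
    ring
  have harg2 : 64 * (r / 20) / ((k : ℝ) * (1 - r) + (64 - (k : ℝ)) * (r / 20))
      = 64 * r / (20 * (k : ℝ) + (64 - 21 * (k : ℝ)) * r) := by
    rw [hD, div_div_eq_mul_div]
    congr 1
    ring
  have main : ∑ x : Fin 64, rib G r y x *
      Real.logb 2 (64 * rib G r y x / ∑ x' : Fin 64, rib G r y x') =
      (k : ℝ) * (1 - r) *
          Real.logb 2 (1280 * (1 - r) / (20 * (k : ℝ) + (64 - 21 * (k : ℝ)) * r)) +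
        ((64 - (k : ℝ)) * r / 20) *
          Real.logb 2 (64 * r / (20 * (k : ℝ) + (64 - 21 * (k : ℝ)) * r)) := by
    rw [key, harg1, harg2]
    ring
  refine ⟨main, ?_⟩
  intro hk1
  subst hk1
  rw [main]
  norm_num
  rw [show (20 : ℝ) + 43 * r = 43 * r + 20 from by ring]
end

section
/- At error probability r = 10⁻⁴, the lower-bound function satisfies g(10⁻⁴) > 4.216; consequently the channel capacity of the ribosome channel satisfies C(10⁻⁴) > 4.216 bits per use. -/
open Finset

-- ===== Auxiliary lemmas =====

section Aux
open Real

lemma negpow_le_log {m : ℕ} {x : ℝ} (hx : (1:ℝ)/2^m ≤ x) : -(m:ℝ) * Real.log 2 ≤ Real.log x := by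
  have h0 : (0:ℝ) < 1/2^m := by positivity
  have h := Real.log_le_log h0 hx
  rw [Real.log_div one_ne_zero (by positivity), Real.log_one, Real.log_pow] at h
  linarith

lemma log3_ub : Real.log 3 ≤ (19 * Real.log 2 + 7153/524288)/12 := by
  have h : (12:ℝ) * Real.log 3 - 19 * Real.log 2 = Real.log (531441/524288) := by
    rw [show (531441/524288:ℝ) = 3^12 / 2^19 by norm_num,
      Real.log_div (by positivity) (by positivity), Real.log_pow, Real.log_pow]
    push_cast; ring
  have hu := Real.log_le_sub_one_of_pos (x := (531441/524288:ℝ)) (by norm_num)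
  norm_num at hu
  linarith

lemma pow2_lb {a y : ℝ} {k : ℕ} (hy : 0 < y) (ha : a = 2^k * y) :
    (k:ℝ) * Real.log 2 + (1 - y⁻¹) ≤ Real.log a := by
  have := Real.one_sub_inv_le_log_of_pos hy
  rw [ha, Real.log_mul (by positivity) (ne_of_gt hy), Real.log_pow]
  linarith

lemma pow2_div3_lb {a y : ℝ} {k : ℕ} (hy : 0 < y) (ha : a = 2^k * y / 3) :
    (k:ℝ) * Real.log 2 - Real.log 3 + (1 - y⁻¹) ≤ Real.log a := by
  have := Real.one_sub_inv_le_log_of_pos hy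
  rw [ha, Real.log_div (by positivity) (by norm_num),
    Real.log_mul (by positivity) (ne_of_gt hy), Real.log_pow]
  linarith

lemma g_num : (4.216:ℝ) < g (1/10000) := by
  unfold g
  norm_num [Real.logb]
  have hL : (0:ℝ) < Real.log 2 := Real.log_pos (by norm_num)
  have h1 : (6:ℝ) * Real.log 2 + (1 - ((22220:ℝ)/22227)⁻¹) ≤ Real.log (1422080/22227 : ℝ) :=
    pow2_lb (k := 6) (by norm_num) (by norm_num)
  have h3 : (5:ℝ) * Real.log 2 + (1 - ((199980:ℝ)/200011)⁻¹) ≤ Real.log (6399360/200011 : ℝ) :=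
    pow2_lb (k := 5) (by norm_num) (by norm_num)
  have h5 : (6:ℝ) * Real.log 2 - Real.log 3 + (1 - ((599940:ℝ)/600001)⁻¹) ≤ Real.log (12798720/600001 : ℝ) :=
    pow2_div3_lb (k := 6) (by norm_num) (by norm_num)
  have h7 : (4:ℝ) * Real.log 2 + (1 - ((13332:ℝ)/13333)⁻¹) ≤ Real.log (213312/13333 : ℝ) :=
    pow2_lb (k := 4) (by norm_num) (by norm_num)
  have h9 : (5:ℝ) * Real.log 2 - Real.log 3 + (1 - ((599940:ℝ)/599969)⁻¹) ≤ Real.log (6399360/599969 : ℝ) :=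
    pow2_div3_lb (k := 5) (by norm_num) (by norm_num)
  have h2 : -(12:ℝ) * Real.log 2 ≤ Real.log (64/200043 : ℝ) := by
    have := negpow_le_log (m := 12) (x := (64/200043:ℝ)) (by norm_num); push_cast at this; linarith
  have h4 : -(13:ℝ) * Real.log 2 ≤ Real.log (32/200011 : ℝ) := by
    have := negpow_le_log (m := 13) (x := (32/200011:ℝ)) (by norm_num); push_cast at this; linarith
  have h6 : -(14:ℝ) * Real.log 2 ≤ Real.log (64/600001 : ℝ) := by
    have := negpow_le_log (m := 14) (x := (64/600001:ℝ)) (by norm_num); push_cast at this; linarith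
  have h8 : -(14:ℝ) * Real.log 2 ≤ Real.log (16/199995 : ℝ) := by
    have := negpow_le_log (m := 14) (x := (16/199995:ℝ)) (by norm_num); push_cast at this; linarith
  have h10 : -(15:ℝ) * Real.log 2 ≤ Real.log (32/599969 : ℝ) := by
    have := negpow_le_log (m := 15) (x := (32/599969:ℝ)) (by norm_num); push_cast at this; linarith
  have h3u := log3_ub
  have hlo := Real.log_two_gt_d9
  have hhi := Real.log_two_lt_d9
  norm_num at h1 h3 h5 h7 h9
  simp only [mul_div_assoc', ← add_div]
  rw [mul_comm (1/64 : ℝ), mul_one_div, div_div]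
  rw [lt_div_iff₀ (by positivity)]
  linarith

def nfib (G : Fin 64 → Fin 21) (y : Fin 21) : ℕ := (univ.filter fun x : Fin 64 => G x = y).card

lemma nfib_le (G : Fin 64 → Fin 21) (y : Fin 21) : nfib G y ≤ 64 := by
  simpa [nfib] using (card_filter_le univ (fun x : Fin 64 => G x = y))

lemma sum_ite_rib (G : Fin 64 → Fin 21) (y : Fin 21) (a b : ℝ) :
    ∑ x : Fin 64, (if y = G x then a else b) = (nfib G y : ℝ) * a + (64 - (nfib G y : ℝ)) * b := by
  rw [Finset.sum_ite]
  have h1 : (univ.filter fun x : Fin 64 => y = G x) = univ.filter fun x : Fin 64 => G x = y := by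
    apply filter_congr; intro x _; simp [eq_comm]
  have h2 : (univ.filter fun x : Fin 64 => ¬ (y = G x)).card = 64 - nfib G y := by
    have h := card_filter_add_card_filter_not (s := (univ : Finset (Fin 64)))
      (p := fun x => y = G x)
    rw [h1] at h
    simp only [card_univ, Fintype.card_fin] at h
    simp only [nfib]
    omega
  rw [sum_const, sum_const, h1, h2, nsmul_eq_mul, nsmul_eq_mul,
    Nat.cast_sub (nfib_le G y)]
  simp only [nfib]
  push_cast
  ring

noncomputable def fT (r n : ℝ) : ℝ :=
  n * ((1/64) * (1-r) * Real.logb 2 ((1-r)/((1/64) * (n*(1-r) + (64-n)*(r/20)))))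
  + (64-n) * ((1/64)*(r/20)*Real.logb 2 ((r/20)/((1/64) * (n*(1-r) + (64-n)*(r/20)))))

lemma denom_eq (G : Fin 64 → Fin 21) (r : ℝ) (y : Fin 21) :
    ∑ x' : Fin 64, (1/64 : ℝ) * rib G r y x'
      = (1/64) * ((nfib G y : ℝ)*(1-r) + (64-(nfib G y : ℝ))*(r/20)) := by
  simp only [rib]
  rw [← Finset.mul_sum, sum_ite_rib]

lemma sum_y (G : Fin 64 → Fin 21) (r : ℝ) (y : Fin 21) :
    ∑ x : Fin 64, (1/64 : ℝ) * rib G r y x *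
        Real.logb 2 (rib G r y x / ∑ x' : Fin 64, (1/64:ℝ) * rib G r y x')
      = fT r (nfib G y : ℝ) := by
  rw [show (∑ x : Fin 64, (1/64 : ℝ) * rib G r y x *
        Real.logb 2 (rib G r y x / ∑ x' : Fin 64, (1/64:ℝ) * rib G r y x'))
      = ∑ x : Fin 64, (if y = G x then
          (1/64 : ℝ) * (1-r) * Real.logb 2 ((1-r) / ((1/64) * ((nfib G y : ℝ)*(1-r) + (64-(nfib G y : ℝ))*(r/20))))
        else
          (1/64 : ℝ) * (r/20) * Real.logb 2 ((r/20) / ((1/64) * ((nfib G y : ℝ)*(1-r) + (64-(nfib G y : ℝ))*(r/20))))) from by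
    refine Finset.sum_congr rfl fun x _ => ?_
    rw [denom_eq]
    by_cases h : y = G x <;> simp [rib, h]]
  rw [sum_ite_rib, fT]

lemma mi_uniform (G : Fin 64 → Fin 21) (r : ℝ) :
    mutualInfo G r (fun _ => 1/64) = ∑ y : Fin 21, fT r (nfib G y : ℝ) := by
  rw [mutualInfo, Finset.sum_comm]
  exact Finset.sum_congr rfl fun y _ => sum_y G r y

lemma sum_fT (G : Fin 64 → Fin 21) (hG : FiberCode G) (r : ℝ) :
    ∑ y : Fin 21, fT r (nfib G y : ℝ)
      = 2 * fT r 1 + 9 * fT r 2 + 2 * fT r 3 + 5 * fT r 4 + 3 * fT r 6 := by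
  classical
  obtain ⟨hG1, hG2, hG3, hG4, hG6⟩ := hG
  set S : ℕ → Finset (Fin 21) := fun k => univ.filter fun y => nfib G y = k with hS
  have hd : ∀ a b : ℕ, a ≠ b → Disjoint (S a) (S b) := by
    intro a b hab
    rw [Finset.disjoint_left]
    intro y hya hyb
    simp only [hS, mem_filter] at hya hyb
    exact hab (hya.2 ▸ hyb.2)
  have hcard : ∀ k : ℕ,
      (S k).card = (univ.filter fun y : Fin 21 => (univ.filter fun x : Fin 64 => G x = y).card = k).card := by
    intro k; rfl
  have hunion : S 1 ∪ S 2 ∪ S 3 ∪ S 4 ∪ S 6 = (univ : Finset (Fin 21)) := by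
    apply Finset.eq_univ_of_card
    rw [card_union_of_disjoint, card_union_of_disjoint, card_union_of_disjoint,
      card_union_of_disjoint]
    · rw [hcard, hcard, hcard, hcard, hcard, hG1, hG2, hG3, hG4, hG6]; rfl
    · exact hd 1 2 (by norm_num)
    · rw [Finset.disjoint_union_left]; exact ⟨hd 1 3 (by norm_num), hd 2 3 (by norm_num)⟩
    · rw [Finset.disjoint_union_left, Finset.disjoint_union_left]
      exact ⟨⟨hd 1 4 (by norm_num), hd 2 4 (by norm_num)⟩, hd 3 4 (by norm_num)⟩
    · rw [Finset.disjoint_union_left, Finset.disjoint_union_left, Finset.disjoint_union_left]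
      exact ⟨⟨⟨hd 1 6 (by norm_num), hd 2 6 (by norm_num)⟩, hd 3 6 (by norm_num)⟩, hd 4 6 (by norm_num)⟩
  have hsum : ∀ k : ℕ, ∑ y ∈ S k, fT r (nfib G y : ℝ) = ((S k).card : ℝ) * fT r (k : ℝ) := by
    intro k
    rw [Finset.sum_congr rfl (fun y hy => by
      rw [show nfib G y = k from (Finset.mem_filter.mp hy).2]), Finset.sum_const, nsmul_eq_mul]
  rw [show (univ : Finset (Fin 21)) = S 1 ∪ S 2 ∪ S 3 ∪ S 4 ∪ S 6 from hunion.symm]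
  rw [Finset.sum_union, Finset.sum_union, Finset.sum_union, Finset.sum_union]
  · rw [hsum 1, hsum 2, hsum 3, hsum 4, hsum 6, hcard 1, hcard 2, hcard 3, hcard 4, hcard 6,
      hG1, hG2, hG3, hG4, hG6]
    norm_num
  · exact hd 1 2 (by norm_num)
  · rw [Finset.disjoint_union_left]; exact ⟨hd 1 3 (by norm_num), hd 2 3 (by norm_num)⟩
  · rw [Finset.disjoint_union_left, Finset.disjoint_union_left]
    exact ⟨⟨hd 1 4 (by norm_num), hd 2 4 (by norm_num)⟩, hd 3 4 (by norm_num)⟩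
  · rw [Finset.disjoint_union_left, Finset.disjoint_union_left, Finset.disjoint_union_left]
    exact ⟨⟨⟨hd 1 6 (by norm_num), hd 2 6 (by norm_num)⟩, hd 3 6 (by norm_num)⟩, hd 4 6 (by norm_num)⟩

lemma fT_g : 2 * fT (1/10000) 1 + 9 * fT (1/10000) 2 + 2 * fT (1/10000) 3
    + 5 * fT (1/10000) 4 + 3 * fT (1/10000) 6 = g (1/10000) := by
  unfold fT g
  norm_num
  ring

lemma rib_pos (G : Fin 64 → Fin 21) (y : Fin 21) (x : Fin 64) :
    0 < rib G (1/10000) y x ∧ rib G (1/10000) y x ≤ 1 := by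
  rw [rib]; split <;> norm_num

lemma term_le (G : Fin 64 → Fin 21) (q : Fin 64 → ℝ) (hq : IsDist q) (x : Fin 64) (y : Fin 21) :
    q x * rib G (1/10000) y x *
      Real.logb 2 (rib G (1/10000) y x / ∑ x' : Fin 64, q x' * rib G (1/10000) y x') ≤ 2 := by
  obtain ⟨hq0, hq1⟩ := hq
  obtain ⟨hr0, hr1⟩ := rib_pos G y x
  rcases eq_or_lt_of_le (hq0 x) with h | h
  · rw [← h]; norm_num
  · have hD : q x * rib G (1/10000) y x ≤ ∑ x' : Fin 64, q x' * rib G (1/10000) y x' :=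
      Finset.single_le_sum (f := fun x' => q x' * rib G (1/10000) y x')
        (fun i _ => mul_nonneg (hq0 i) (rib_pos G y i).1.le) (mem_univ x)
    have hDpos : 0 < ∑ x' : Fin 64, q x' * rib G (1/10000) y x' :=
      lt_of_lt_of_le (mul_pos h hr0) hD
    have hlogb : Real.logb 2 (rib G (1/10000) y x / ∑ x' : Fin 64, q x' * rib G (1/10000) y x')
        ≤ Real.logb 2 (q x)⁻¹ := by
      apply Real.logb_le_logb_of_le (by norm_num) (by positivity)
      rw [div_le_iff₀ hDpos]
      calc rib G (1/10000) y x = (q x)⁻¹ * (q x * rib G (1/10000) y x) := by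
            field_simp
        _ ≤ (q x)⁻¹ * ∑ x' : Fin 64, q x' * rib G (1/10000) y x' := by
            apply mul_le_mul_of_nonneg_left hD (by positivity)
    have hlog2 : (0.6931471803 : ℝ) < Real.log 2 := Real.log_two_gt_d9
    have hqx1 : q x ≤ 1 := by
      rw [← hq1]
      exact Finset.single_le_sum (fun i _ => hq0 i) (mem_univ x)
    have hlq : Real.logb 2 (q x)⁻¹ ≤ ((q x)⁻¹ - 1) / Real.log 2 := by
      rw [Real.logb, Real.log_inv]
      have := Real.one_sub_inv_le_log_of_pos h
      apply div_le_div_of_nonneg_right ?_ (by linarith)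
      linarith
    calc q x * rib G (1/10000) y x * Real.logb 2 (rib G (1/10000) y x / ∑ x' : Fin 64, q x' * rib G (1/10000) y x')
        ≤ q x * rib G (1/10000) y x * (((q x)⁻¹ - 1) / Real.log 2) := by
          apply mul_le_mul_of_nonneg_left (le_trans hlogb hlq)
            (mul_nonneg (hq0 x) hr0.le)
      _ = rib G (1/10000) y x * (1 - q x) / Real.log 2 := by
          field_simp
      _ ≤ 2 := by
          rw [div_le_iff₀ (by linarith)]
          nlinarith [hq0 x]

lemma mi_bdd (G : Fin 64 → Fin 21) (q : Fin 64 → ℝ) (hq : IsDist q) :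
    mutualInfo G (1/10000) q ≤ 2688 := by
  rw [mutualInfo]
  calc (∑ x : Fin 64, ∑ y : Fin 21, q x * rib G (1/10000) y x *
      Real.logb 2 (rib G (1/10000) y x / ∑ x' : Fin 64, q x' * rib G (1/10000) y x'))
      ≤ ∑ _x : Fin 64, ∑ _y : Fin 21, (2:ℝ) := by
        apply Finset.sum_le_sum; intro x _
        apply Finset.sum_le_sum; intro y _
        exact term_le G q hq x y
    _ = 2688 := by simp; norm_num

end Aux

/-- At `r = 10⁻⁴`, the lower bound satisfies `g(10⁻⁴) > 4.216`, hence
`C(10⁻⁴) > 4.216` bits per use. -/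
theorem ribosome_lower_bound_at_typical_error (G : Fin 64 → Fin 21) (hG : FiberCode G) :
    (4.216 : ℝ) < g (1 / 10000) ∧ (4.216 : ℝ) < capacity G (1 / 10000) := by
  have hgnum : (4.216 : ℝ) < g (1 / 10000) := g_num
  refine ⟨hgnum, ?_⟩
  have hdist : IsDist (fun _ : Fin 64 => (1/64 : ℝ)) := by
    constructor
    · intro x; norm_num
    · simp
  have hmem : g (1/10000) ∈ {c : ℝ | ∃ q : Fin 64 → ℝ, IsDist q ∧ c = mutualInfo G (1/10000) q} :=
    ⟨fun _ => 1/64, hdist, by rw [mi_uniform, sum_fT G hG, fT_g]⟩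
  have hbdd : BddAbove {c : ℝ | ∃ q : Fin 64 → ℝ, IsDist q ∧ c = mutualInfo G (1/10000) q} := by
    refine ⟨2688, fun c hc => ?_⟩
    obtain ⟨q, hq, rfl⟩ := hc
    exact mi_bdd G q hq
  exact lt_of_lt_of_le hgnum (le_csSup hbdd hmem)
end
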